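/- With V, orthogonal maps w_0,…,w_m, reflections s_{j_1},…,s_{j_m} in nonzero α_{j_ℓ}, and with w := w_0 s_{j_1} w_1 ⋯ s_{j_m} w_m, w^Δ := w_0 w_1 ⋯ w_m, β_{j_ℓ} := w_0 s_{j_1} ⋯ w_{ℓ−1}(α_{j_ℓ}), β^Δ_{j_ℓ} := w_0 w_1 ⋯ w_{ℓ−1}(α_{j_ℓ}): for all 1 ≤ ℓ ≤ m and γ ∈ V, ⟨(w + w^Δ)(γ), β_{j_ℓ}⟩ = Σ_{h≠ℓ} (−1)^{χ(h>ℓ)} ⟨β_{j_h}, β_{j_ℓ}⟩ · ⟨(β^Δ_{j_h})∨, w^Δ(γ)⟩, where χ(h>ℓ) is 1 if h>ℓ and 0 otherwise, and β∨ = (2/⟨β,β⟩)β. -/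

import Mathlib

open scoped RealInnerProductSpace

/-- `pref w s ℓ = w₀ s₁ w₁ ⋯ s_ℓ w_ℓ` (composition of endomorphisms). -/
def pref {V : Type*} [NormedAddCommGroup V] [InnerProductSpace ℝ V]
    (w s : ℕ → Module.End ℝ V) : ℕ → Module.End ℝ V
  | 0 => w 0
  | ℓ + 1 => pref w s ℓ * s (ℓ + 1) * w (ℓ + 1)

/-- `plainPref w ℓ = w₀ w₁ ⋯ w_ℓ`. -/
def plainPref {V : Type*} [NormedAddCommGroup V] [InnerProductSpace ℝ V]
    (w : ℕ → Module.End ℝ V) : ℕ → Module.End ℝ V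
  | 0 => w 0
  | ℓ + 1 => plainPref w ℓ * w (ℓ + 1)

/-- `suff w m ℓ = w_ℓ w_{ℓ+1} ⋯ w_m`. -/
def suff {V : Type*} [NormedAddCommGroup V] [InnerProductSpace ℝ V]
    (w : ℕ → Module.End ℝ V) (m ℓ : ℕ) : Module.End ℝ V :=
  ((List.range (m + 1 - ℓ)).map fun i => w (ℓ + i)).prod

/-- `uop w s m ℓ = w₀ s₁ w₁ ⋯ w_{ℓ-1} (s_ℓ - id) w_ℓ ⋯ w_m`. -/
def uop {V : Type*} [NormedAddCommGroup V] [InnerProductSpace ℝ V]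
    (w s : ℕ → Module.End ℝ V) (m ℓ : ℕ) : Module.End ℝ V :=
  pref w s (ℓ - 1) * (s ℓ - 1) * suff w m ℓ

/-- `vop w s m ℓ = w₀ s₁ w₁ ⋯ w_{ℓ-1} (s_ℓ + id) w_ℓ ⋯ w_m`. -/
def vop {V : Type*} [NormedAddCommGroup V] [InnerProductSpace ℝ V]
    (w s : ℕ → Module.End ℝ V) (m ℓ : ℕ) : Module.End ℝ V :=
  pref w s (ℓ - 1) * (s ℓ + 1) * suff w m ℓ

/-- `β_{j_ℓ} = w₀ s₁ w₁ ⋯ s_{ℓ-1} w_{ℓ-1} (α_{j_ℓ})`. -/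
def betaV {V : Type*} [NormedAddCommGroup V] [InnerProductSpace ℝ V]
    (w s : ℕ → Module.End ℝ V) (α : ℕ → V) (ℓ : ℕ) : V :=
  pref w s (ℓ - 1) (α ℓ)

/-- `β^Δ_{j_ℓ} = w₀ w₁ ⋯ w_{ℓ-1} (α_{j_ℓ})`. -/
def betaD {V : Type*} [NormedAddCommGroup V] [InnerProductSpace ℝ V]
    (w : ℕ → Module.End ℝ V) (α : ℕ → V) (ℓ : ℕ) : V :=
  plainPref w (ℓ - 1) (α ℓ)

/-- `⟨(β^Δ_{j_ℓ})∨, w^Δ(γ)⟩` where `β∨ = (2/⟨β,β⟩)β`. -/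
noncomputable def coeffc {V : Type*} [NormedAddCommGroup V] [InnerProductSpace ℝ V]
    (w s : ℕ → Module.End ℝ V) (α : ℕ → V) (m : ℕ) (γ : V) (ℓ : ℕ) : ℝ :=
  (2 / ⟪betaD w α ℓ, betaD w α ℓ⟫) * ⟪betaD w α ℓ, plainPref w m γ⟫

/-! Each reflection differs from the identity by a rank-one map: inserting `s_h - 1` into
`w^Δ` gives `w₀ s₁ ⋯ w_{h-1} (s_h - 1) w_h ⋯ w_m γ = -c_h β_h` with `c_h = ⟨(β^Δ_h)∨, w^Δ γ⟩`,
since the `w_i` are isometries. Telescoping over all `h` gives `w γ = w^Δ γ - ∑_h c_h β_h`;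
telescoping only over `h < ℓ` and pairing with `β_ℓ = w₀ s₁ ⋯ w_{ℓ-1} (α_ℓ)`, an isometric image
of `α_ℓ`, gives `⟨w^Δ γ, β_ℓ⟩ = ∑_{h<ℓ} c_h ⟨β_h, β_ℓ⟩ + c_ℓ ⟨β_ℓ, β_ℓ⟩ / 2`.
Adding the two identities produces the signs `(-1)^{χ(h>ℓ)}`. -/

open Finset

section Reflection

variable {V : Type*} [NormedAddCommGroup V] [InnerProductSpace ℝ V]

theorem inner_map_map_of_eq_reflection {s : Module.End ℝ V} {a : V}
    (hs : ∀ v, s v = v - ((2 * ⟪a, v⟫) / ⟪a, a⟫) • a) (x y : V) :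
    ⟪s x, s y⟫ = ⟪x, y⟫ := by
  rw [hs, hs]
  simp only [inner_sub_left, inner_sub_right, real_inner_smul_left, real_inner_smul_right,
    real_inner_comm x a]
  rcases eq_or_ne a 0 with rfl | ha
  · simp
  · field_simp
    ring

theorem two_mul_inner_div_inner_self_mul_inner_self (a x : V) :
    2 * ⟪a, x⟫ / ⟪a, a⟫ * ⟪a, a⟫ = 2 * ⟪a, x⟫ := by
  rcases eq_or_ne a 0 with rfl | ha
  · simp
  · exact div_mul_cancel₀ _ (inner_self_ne_zero.2 ha)

end Reflection

section Products

variable {V : Type*} [NormedAddCommGroup V] [InnerProductSpace ℝ V]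
  (w s : ℕ → Module.End ℝ V)

theorem suff_succ_self (m : ℕ) : suff w m (m + 1) = 1 := by
  simp [suff]

theorem suff_eq_mul_suff_succ {m ℓ : ℕ} (h : ℓ ≤ m) :
    suff w m ℓ = w ℓ * suff w m (ℓ + 1) := by
  unfold suff
  rw [show m + 1 - ℓ = m + 1 - (ℓ + 1) + 1 by omega, List.range_succ_eq_map,
    List.map_cons, List.prod_cons, List.map_map]
  congr 2
  exact List.map_congr_left fun i _ => by simp only [Function.comp_apply]; congr 1; omega

theorem plainPref_eq_mul_suff {m ℓ : ℕ} (h : ℓ ≤ m) :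
    plainPref w m = plainPref w ℓ * suff w m (ℓ + 1) := by
  induction h using Nat.decreasingInduction with
  | self => rw [suff_succ_self, mul_one]
  | of_succ ℓ hℓ ih => rw [ih, plainPref, mul_assoc, ← suff_eq_mul_suff_succ w hℓ]

theorem pref_mul_suff_succ {m k : ℕ} (hk : k ≤ m) :
    pref w s k * suff w m (k + 1) = plainPref w m + ∑ h ∈ Icc 1 k, uop w s m h := by
  induction k with
  | zero => rw [plainPref_eq_mul_suff w (Nat.zero_le m)]; simp [pref, plainPref]
  | succ k ih =>
    have hstep : pref w s (k + 1) * suff w m (k + 2) =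
        pref w s k * suff w m (k + 1) + uop w s m (k + 1) := by
      rw [pref, mul_assoc, mul_assoc, ← suff_eq_mul_suff_succ w hk, uop, Nat.add_sub_cancel]
      noncomm_ring
    rw [hstep, ih (by omega), sum_Icc_succ_top (by omega)]
    abel

end Products

section Isometry

variable {V : Type*} [NormedAddCommGroup V] [InnerProductSpace ℝ V]
  {w s : ℕ → Module.End ℝ V} {α : ℕ → V}

theorem inner_plainPref_plainPref (hw : ∀ i (x y : V), ⟪w i x, w i y⟫ = ⟪x, y⟫) (ℓ : ℕ) (x y : V) :
    ⟪plainPref w ℓ x, plainPref w ℓ y⟫ = ⟪x, y⟫ := by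
  induction ℓ generalizing x y with
  | zero => exact hw 0 x y
  | succ ℓ ih => simp only [plainPref, Module.End.mul_apply, ih, hw]

theorem inner_pref_pref (hw : ∀ i (x y : V), ⟪w i x, w i y⟫ = ⟪x, y⟫)
    (hs : ∀ ℓ (v : V), s ℓ v = v - ((2 * ⟪α ℓ, v⟫) / ⟪α ℓ, α ℓ⟫) • α ℓ) (ℓ : ℕ) (x y : V) :
    ⟪pref w s ℓ x, pref w s ℓ y⟫ = ⟪x, y⟫ := by
  induction ℓ generalizing x y with
  | zero => exact hw 0 x y
  | succ ℓ ih =>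
    simp only [pref, Module.End.mul_apply, ih, inner_map_map_of_eq_reflection (hs _), hw]

theorem coeffc_succ (hw : ∀ i (x y : V), ⟪w i x, w i y⟫ = ⟪x, y⟫) {m k : ℕ} (hk : k < m) (γ : V) :
    coeffc w s α m γ (k + 1) = 2 * ⟪α (k + 1), suff w m (k + 1) γ⟫ / ⟪α (k + 1), α (k + 1)⟫ := by
  rw [coeffc, betaD, Nat.add_sub_cancel, plainPref_eq_mul_suff w hk.le, Module.End.mul_apply,
    inner_plainPref_plainPref hw, inner_plainPref_plainPref hw]
  ring

theorem uop_succ_apply (hw : ∀ i (x y : V), ⟪w i x, w i y⟫ = ⟪x, y⟫)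
    (hs : ∀ ℓ (v : V), s ℓ v = v - ((2 * ⟪α ℓ, v⟫) / ⟪α ℓ, α ℓ⟫) • α ℓ)
    {m k : ℕ} (hk : k < m) (γ : V) :
    uop w s m (k + 1) γ = -(coeffc w s α m γ (k + 1) • betaV w s α (k + 1)) := by
  rw [coeffc_succ hw hk, uop, betaV, Nat.add_sub_cancel, Module.End.mul_apply,
    Module.End.mul_apply, LinearMap.sub_apply, Module.End.one_apply, hs, sub_sub_cancel_left,
    map_neg, map_smul]

end Isometry

section Expansion

variable {V : Type*} [NormedAddCommGroup V] [InnerProductSpace ℝ V]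
  {w s : ℕ → Module.End ℝ V} {α : ℕ → V}

theorem pref_apply_suff_succ (hw : ∀ i (x y : V), ⟪w i x, w i y⟫ = ⟪x, y⟫)
    (hs : ∀ ℓ (v : V), s ℓ v = v - ((2 * ⟪α ℓ, v⟫) / ⟪α ℓ, α ℓ⟫) • α ℓ)
    {m k : ℕ} (hk : k ≤ m) (γ : V) :
    pref w s k (suff w m (k + 1) γ) =
      plainPref w m γ - ∑ h ∈ Icc 1 k, coeffc w s α m γ h • betaV w s α h := by
  rw [← Module.End.mul_apply, pref_mul_suff_succ w s hk, LinearMap.add_apply,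
    LinearMap.sum_apply, sub_eq_add_neg, ← sum_neg_distrib]
  refine congrArg _ (sum_congr rfl fun h hh => ?_)
  obtain ⟨j, rfl⟩ : ∃ j, h = j + 1 := ⟨h - 1, by grind⟩
  exact uop_succ_apply hw hs (by grind) γ

theorem inner_plainPref_betaV (hw : ∀ i (x y : V), ⟪w i x, w i y⟫ = ⟪x, y⟫)
    (hs : ∀ ℓ (v : V), s ℓ v = v - ((2 * ⟪α ℓ, v⟫) / ⟪α ℓ, α ℓ⟫) • α ℓ)
    {m k : ℕ} (hk : k < m) (γ : V) :
    ⟪plainPref w m γ, betaV w s α (k + 1)⟫ =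
      ∑ h ∈ Icc 1 k, ⟪betaV w s α h, betaV w s α (k + 1)⟫ * coeffc w s α m γ h +
        ⟪betaV w s α (k + 1), betaV w s α (k + 1)⟫ * coeffc w s α m γ (k + 1) / 2 := by
  have hdiag : ⟪pref w s k (suff w m (k + 1) γ), betaV w s α (k + 1)⟫ =
      ⟪betaV w s α (k + 1), betaV w s α (k + 1)⟫ * coeffc w s α m γ (k + 1) / 2 := by
    rw [betaV, Nat.add_sub_cancel, inner_pref_pref hw hs, inner_pref_pref hw hs, coeffc_succ hw hk,
      mul_comm, two_mul_inner_div_inner_self_mul_inner_self, real_inner_comm]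
    ring
  rw [pref_apply_suff_succ hw hs hk.le, inner_sub_left, sum_inner] at hdiag
  simp only [real_inner_smul_left, mul_comm (coeffc w s α m γ _)] at hdiag
  linarith

end Expansion

theorem sum_Icc_sdiff_singleton_neg_one_pow_mul {R : Type*} [CommRing R] (f : ℕ → R)
    {m k : ℕ} (hk : k < m) :
    ∑ h ∈ Icc 1 m \ {k + 1}, (-1 : R) ^ (if k + 1 < h then 1 else 0) * f h =
      2 * ∑ h ∈ Icc 1 k, f h + f (k + 1) - ∑ h ∈ Icc 1 m, f h := by
  have hsplit : Icc 1 m \ {k + 1} = Icc 1 k ∪ Ioc (k + 1) m := by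
    ext h
    simp only [mem_sdiff, mem_Icc, mem_Ioc, mem_union, mem_singleton]
    omega
  have hdisj : Disjoint (Icc 1 k) (Ioc (k + 1) m) :=
    disjoint_left.2 fun h => by simp only [mem_Icc, mem_Ioc]; omega
  have htotal : ∑ h ∈ Icc 1 m, f h = ∑ h ∈ Icc 1 k, f h + f (k + 1) + ∑ h ∈ Ioc (k + 1) m, f h := by
    rw [← add_sum_erase _ f (by grind : k + 1 ∈ Icc 1 m),
      ← sdiff_singleton_eq_erase, hsplit, sum_union hdisj]
    ring
  have hbelow : ∀ h ∈ Icc 1 k, (-1 : R) ^ (if k + 1 < h then 1 else 0) * f h = f h := by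
    intro h hh
    rw [if_neg (by grind), pow_zero, one_mul]
  have habove : ∀ h ∈ Ioc (k + 1) m, (-1 : R) ^ (if k + 1 < h then 1 else 0) * f h = -f h := by
    intro h hh
    rw [if_pos (by grind), pow_one, neg_one_mul]
  rw [hsplit, sum_union hdisj, sum_congr rfl hbelow, sum_congr rfl habove, sum_neg_distrib, htotal]
  ring

theorem inner_w_plus_wDelta_with_beta_general
    {V : Type*} [NormedAddCommGroup V] [InnerProductSpace ℝ V]
    (m : ℕ) (w s : ℕ → Module.End ℝ V) (α : ℕ → V)
    (hw : ∀ i (x y : V), ⟪w i x, w i y⟫ = ⟪x, y⟫)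
    (hs : ∀ ℓ (v : V), s ℓ v = v - ((2 * ⟪α ℓ, v⟫) / ⟪α ℓ, α ℓ⟫) • α ℓ) :
    ∀ (γ : V) (ℓ : ℕ), 1 ≤ ℓ → ℓ ≤ m →
      ⟪(pref w s m + plainPref w m) γ, betaV w s α ℓ⟫ =
        ∑ h ∈ Finset.Icc 1 m \ {ℓ},
          (-1 : ℝ) ^ (if ℓ < h then 1 else 0) * ⟪betaV w s α h, betaV w s α ℓ⟫ *
            coeffc w s α m γ h := by
  intro γ ℓ hℓ1 hℓm
  obtain ⟨k, rfl⟩ : ∃ k, ℓ = k + 1 := ⟨ℓ - 1, by omega⟩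
  have hpref : pref w s m γ =
      plainPref w m γ - ∑ h ∈ Icc 1 m, coeffc w s α m γ h • betaV w s α h := by
    simpa [suff_succ_self] using pref_apply_suff_succ hw hs le_rfl γ
  simp_rw [mul_assoc]
  rw [sum_Icc_sdiff_singleton_neg_one_pow_mul _ (by omega), LinearMap.add_apply, inner_add_left,
    hpref, inner_sub_left, inner_plainPref_betaV hw hs (by omega)]
  simp only [sum_inner, real_inner_smul_left, mul_comm (coeffc w s α m γ _)]
  ring

theorem inner_w_plus_wDelta_with_beta
    {V : Type*} [NormedAddCommGroup V] [InnerProductSpace ℝ V] [FiniteDimensional ℝ V]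
    (m : ℕ) (w s : ℕ → Module.End ℝ V) (α : ℕ → V)
    (hα : ∀ ℓ, α ℓ ≠ 0)
    (hw : ∀ i (x y : V), ⟪w i x, w i y⟫ = ⟪x, y⟫)
    (hs : ∀ ℓ (v : V), s ℓ v = v - ((2 * ⟪α ℓ, v⟫) / ⟪α ℓ, α ℓ⟫) • α ℓ) :
    ∀ (γ : V) (ℓ : ℕ), 1 ≤ ℓ → ℓ ≤ m →
      ⟪(pref w s m + plainPref w m) γ, betaV w s α ℓ⟫ =
        ∑ h ∈ Finset.Icc 1 m \ {ℓ},
          (-1 : ℝ) ^ (if ℓ < h then 1 else 0) * ⟪betaV w s α h, betaV w s α ℓ⟫ *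
            coeffc w s α m γ h :=
  inner_w_plus_wDelta_with_beta_general m w s α hw hs
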